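/- Let h : [0,1] → ℝ be continuous and piecewise strictly monotonic with a single turning point at δ ∈ (0,1): strictly decreasing on [0,δ], strictly increasing on [δ,1], with lim_{u→0} h(u) = lim_{u→1} h(u). Write h_ℓ for h on [0,δ] and h_r for h on [δ,1], and let F_h be the distribution function of h(U) for U ~ Uniform(0,1). Then T_h = F_h ∘ h satisfies T_h(u) = h_r^{-1}(h_ℓ(u)) − u for u ≤ δ and T_h(u) = u − h_ℓ^{-1}(h_r(u)) for u > δ; in particular, if h is symmetric about δ = 1/2 (h(u) = h(1−u)), then T_h(u) = |2u − 1|. -/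

import Mathlib

open MeasureTheory Set

noncomputable section

/-- The uniform distribution on `[0,1]`. -/
def unif : Measure ℝ := volume.restrict (Icc (0:ℝ) 1)

/-- The distribution function of `h(W)` for `W ~ Uniform(0,1)`. -/
def distFun (h : ℝ → ℝ) (x : ℝ) : ℝ := (unif {w | h w ≤ x}).toReal

/-- If `h` is continuous on `[0,1]`, strictly decreasing on `[0,δ]`, strictly increasing
on `[δ,1]` with `h(0) = h(1)`, then `T_h = F_h ∘ h` is the v-transform
`T_h(u) = h_r⁻¹(h_ℓ(u)) − u` for `u ≤ δ` and `T_h(u) = u − h_ℓ⁻¹(h_r(u))` for `u > δ`;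
and if moreover `h` is symmetric about `δ = 1/2`, then `T_h(u) = |2u − 1|`. -/
theorem stmt16 (h : ℝ → ℝ) (δ : ℝ) (hδ : δ ∈ Ioo (0:ℝ) 1)
    (hmeas : Measurable h) (hcont : ContinuousOn h (Icc (0:ℝ) 1))
    (hdec : StrictAntiOn h (Icc (0:ℝ) δ)) (hinc : StrictMonoOn h (Icc δ 1))
    (hends : h 0 = h 1) :
    (∀ u ∈ Icc (0:ℝ) 1, u ≤ δ →
      distFun h (h u) = Function.invFunOn h (Icc δ 1) (h u) - u) ∧
    (∀ u ∈ Icc (0:ℝ) 1, δ < u →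
      distFun h (h u) = u - Function.invFunOn h (Icc (0:ℝ) δ) (h u)) ∧
    (δ = 1/2 → (∀ u ∈ Icc (0:ℝ) 1, h u = h (1 - u)) →
      ∀ u ∈ Icc (0:ℝ) 1, distFun h (h u) = |2*u - 1|) := by
  obtain ⟨hδ0, hδ1⟩ := hδ
  have hδ0' := hδ0.le
  have hδ1' := hδ1.le
  -- Part 1
  have P1 : ∀ u ∈ Icc (0:ℝ) 1, u ≤ δ →
      distFun h (h u) = Function.invFunOn h (Icc δ 1) (h u) - u := by
    intro u hu huδ
    have hu0 : 0 ≤ u := hu.1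
    have hhu_le : h u ≤ h 1 := by
      rw [← hends]
      exact (hdec.le_iff_ge ⟨hu0, huδ⟩ ⟨le_refl 0, hδ0'⟩).mpr hu0
    have hhδu : h δ ≤ h u := (hdec.le_iff_ge ⟨hδ0', le_refl δ⟩ ⟨hu0, huδ⟩).mpr huδ
    obtain ⟨v0, hv0, hv0eq⟩ := intermediate_value_Icc hδ1'
      (hcont.mono (Icc_subset_Icc hδ0' le_rfl)) ⟨hhδu, hhu_le⟩
    have hex : ∃ x ∈ Icc δ 1, h x = h u := ⟨v0, hv0, hv0eq⟩
    set v := Function.invFunOn h (Icc δ 1) (h u) with hv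
    have hvmem : v ∈ Icc δ 1 := Function.invFunOn_mem hex
    have hveq : h v = h u := Function.invFunOn_eq hex
    have hset : {w | h w ≤ h u} ∩ Icc (0:ℝ) 1 = Icc u v := by
      ext w
      simp only [mem_inter_iff, mem_setOf_eq, mem_Icc]
      constructor
      · rintro ⟨hw, hw0, hw1⟩
        by_cases hwδ : w ≤ δ
        · exact ⟨(hdec.le_iff_ge ⟨hw0, hwδ⟩ ⟨hu0, huδ⟩).mp hw, le_trans hwδ hvmem.1⟩
        · push_neg at hwδ
          have : h w ≤ h v := hveq ▸ hw
          exact ⟨le_trans huδ hwδ.le, (hinc.le_iff_le ⟨hwδ.le, hw1⟩ hvmem).mp this⟩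
      · rintro ⟨huw, hwv⟩
        have hw0 : 0 ≤ w := le_trans hu0 huw
        have hw1 : w ≤ 1 := le_trans hwv hvmem.2
        refine ⟨?_, hw0, hw1⟩
        by_cases hwδ : w ≤ δ
        · exact (hdec.le_iff_ge ⟨hw0, hwδ⟩ ⟨hu0, huδ⟩).mpr huw
        · push_neg at hwδ
          calc h w ≤ h v := (hinc.le_iff_le ⟨hwδ.le, hw1⟩ hvmem).mpr hwv
            _ = h u := hveq
    have hmeas' : MeasurableSet {w | h w ≤ h u} :=
      measurableSet_le hmeas measurable_const
    rw [distFun, unif, Measure.restrict_apply hmeas', hset, Real.volume_Icc,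
      ENNReal.toReal_ofReal (by linarith [hvmem.1] : (0:ℝ) ≤ v - u)]
  -- Part 2
  have P2 : ∀ u ∈ Icc (0:ℝ) 1, δ < u →
      distFun h (h u) = u - Function.invFunOn h (Icc (0:ℝ) δ) (h u) := by
    intro u hu hδu
    have hu1 : u ≤ 1 := hu.2
    have hhu_le : h u ≤ h 0 := by
      rw [hends]
      exact (hinc.le_iff_le ⟨hδu.le, hu1⟩ ⟨hδ1', le_refl 1⟩).mpr hu1
    have hhδu : h δ ≤ h u := (hinc.le_iff_le ⟨le_refl δ, hδ1'⟩ ⟨hδu.le, hu1⟩).mpr hδu.le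
    obtain ⟨v0, hv0, hv0eq⟩ := intermediate_value_Icc' hδ0'
      (hcont.mono (Icc_subset_Icc le_rfl hδ1')) ⟨hhδu, hhu_le⟩
    have hex : ∃ x ∈ Icc (0:ℝ) δ, h x = h u := ⟨v0, hv0, hv0eq⟩
    set v := Function.invFunOn h (Icc (0:ℝ) δ) (h u) with hv
    have hvmem : v ∈ Icc (0:ℝ) δ := Function.invFunOn_mem hex
    have hveq : h v = h u := Function.invFunOn_eq hex
    have hset : {w | h w ≤ h u} ∩ Icc (0:ℝ) 1 = Icc v u := by
      ext w
      simp only [mem_inter_iff, mem_setOf_eq, mem_Icc]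
      constructor
      · rintro ⟨hw, hw0, hw1⟩
        by_cases hwδ : w ≤ δ
        · have : h w ≤ h v := hveq ▸ hw
          exact ⟨(hdec.le_iff_ge ⟨hw0, hwδ⟩ hvmem).mp this, le_trans hwδ hδu.le⟩
        · push_neg at hwδ
          exact ⟨le_trans hvmem.2 hwδ.le,
            (hinc.le_iff_le ⟨hwδ.le, hw1⟩ ⟨hδu.le, hu1⟩).mp hw⟩
      · rintro ⟨hvw, hwu⟩
        have hw0 : 0 ≤ w := le_trans hvmem.1 hvw
        have hw1 : w ≤ 1 := le_trans hwu hu1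
        refine ⟨?_, hw0, hw1⟩
        by_cases hwδ : w ≤ δ
        · calc h w ≤ h v := (hdec.le_iff_ge ⟨hw0, hwδ⟩ hvmem).mpr hvw
            _ = h u := hveq
        · push_neg at hwδ
          exact (hinc.le_iff_le ⟨hwδ.le, hw1⟩ ⟨hδu.le, hu1⟩).mpr hwu
    have hmeas' : MeasurableSet {w | h w ≤ h u} :=
      measurableSet_le hmeas measurable_const
    rw [distFun, unif, Measure.restrict_apply hmeas', hset, Real.volume_Icc,
      ENNReal.toReal_ofReal (by linarith [hvmem.2] : (0:ℝ) ≤ u - v)]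
  refine ⟨P1, P2, ?_⟩
  -- Part 3
  intro hδhalf hsym u hu
  subst hδhalf
  have hu0 : 0 ≤ u := hu.1
  have hu1 : u ≤ 1 := hu.2
  have hsymu : h (1 - u) = h u := (hsym u hu).symm
  by_cases huδ : u ≤ 1/2
  · have h1u : (1:ℝ) - u ∈ Icc (1/2 : ℝ) 1 := ⟨by linarith, by linarith⟩
    have hex : ∃ x ∈ Icc (1/2 : ℝ) 1, h x = h u := ⟨1 - u, h1u, hsymu⟩
    have hvmem := Function.invFunOn_mem hex
    have hveq := Function.invFunOn_eq hex
    have hvval : Function.invFunOn h (Icc (1/2 : ℝ) 1) (h u) = 1 - u :=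
      hinc.injOn hvmem h1u (hveq.trans hsymu.symm)
    rw [P1 u hu huδ, hvval, abs_of_nonpos (by linarith)]
    ring
  · push_neg at huδ
    have h1u : (1:ℝ) - u ∈ Icc (0:ℝ) (1/2) := ⟨by linarith, by linarith⟩
    have hex : ∃ x ∈ Icc (0:ℝ) (1/2), h x = h u := ⟨1 - u, h1u, hsymu⟩
    have hvmem := Function.invFunOn_mem hex
    have hveq := Function.invFunOn_eq hex
    have hvval : Function.invFunOn h (Icc (0:ℝ) (1/2)) (h u) = 1 - u :=
      hdec.injOn hvmem h1u (hveq.trans hsymu.symm)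
    rw [P2 u hu huδ, hvval, abs_of_nonneg (by linarith)]
    ring
end
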